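/- Let g, h ∈ K be nondecreasing functions in L²(0,1), and let P_{H_g} be the orthogonal projection onto the closed subspace H_g of functions essentially constant on each connected component of the open set Ω_g where g is locally constant. Then ξ_h := P_{H_g}(h) - h belongs to the subdifferential ∂I_K(g). -/

import Mathlib

open MeasureTheory Set Filter

noncomputable section

/-- Lebesgue measure restricted to the interval (0,1). -/
def μ01 : MeasureTheory.Measure ℝ := MeasureTheory.volume.restrict (Set.Ioo 0 1)

/-- The convex cone `K` of (essentially) nondecreasing functions in L²(0,1). -/
def coneK : Set (ℝ → ℝ) := {g | MonotoneOn g (Set.Ioo 0 1) ∧ MeasureTheory.MemLp g 2 μ01}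

/-- `g` is the L²(0,1)-orthogonal projection of `f` onto the cone `K`,
characterized by the variational inequality `⟨f - g, z - g⟩ ≤ 0` for all `z ∈ K`. -/
def IsProjK (f g : ℝ → ℝ) : Prop :=
  g ∈ coneK ∧ ∀ z ∈ coneK, (∫ w in Set.Ioo (0:ℝ) 1, (f w - g w) * (z w - g w)) ≤ 0

/-- The convex envelope of `F` on `[0,1]`: the supremum of affine functions below `F` there. -/
def convEnv (F : ℝ → ℝ) (w : ℝ) : ℝ :=
  sSup {y | ∃ a b : ℝ, y = a + b * w ∧ ∀ v ∈ Set.Icc (0:ℝ) 1, a + b * v ≤ F v}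

/-- The open set `Ω_g ⊆ (0,1)` of points near which `g` is essentially constant. -/
def locConstSet (g : ℝ → ℝ) : Set ℝ :=
  {w | w ∈ Set.Ioo (0:ℝ) 1 ∧ ∃ a b c : ℝ, a < w ∧ w < b ∧
    ∀ᵐ x ∂μ01, x ∈ Set.Ioo a b → g x = c}

/-- The closed subspace `H_g` of L²(0,1) functions essentially constant on each
open interval contained in `Ω_g`. -/
def Hspace (g : ℝ → ℝ) : Set (ℝ → ℝ) :=
  {u | MeasureTheory.MemLp u 2 μ01 ∧ ∀ a b : ℝ, Set.Ioo a b ⊆ locConstSet g →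
    ∃ c : ℝ, ∀ᵐ x ∂μ01, x ∈ Set.Ioo a b → u x = c}

/-- `ξ` belongs to the subdifferential `∂I_K(g)` of the indicator function of `K` at `g ∈ K`. -/
def subdiffIK (g ξ : ℝ → ℝ) : Prop :=
  g ∈ coneK ∧ ∀ z ∈ coneK, (∫ w in Set.Ioo (0:ℝ) 1, ξ w * (z w - g w)) ≤ 0

/-- `P` is the L²(0,1)-orthogonal projection of `h` onto the closed subspace `H_g`. -/
def IsProjH (g h P : ℝ → ℝ) : Prop :=
  P ∈ Hspace g ∧ ∀ u ∈ Hspace g, (∫ w in Set.Ioo (0:ℝ) 1, (h w - P w) * u w) = 0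

/-! Write `ξ = P - h` and `Ω = Ω_g`. Since `g ∈ H_g`, `⟨ξ, g⟩ = 0`, so it suffices that
`⟨ξ, z⟩ ≤ 0` for every nondecreasing `z`. Testing the orthogonality of `h - P` to `H_g` against
`(h - P) 1_{Ωᶜ}` shows `P = h` a.e. off `Ω`, and testing it against `1_C` for a connected
component `C` of `Ω` shows that the constant value of `P` on `C` is the mean of `h` over `C`.
Chebyshev's integral inequality for the nondecreasing `h` and `z` then gives `∫_C ξ z ≤ 0`,
and `Ω` is the countable disjoint union of its components. -/

open TopologicalSpace

theorem MonovaryOn.integral_mul_integral_le_measureReal_mul_integral {α : Type*}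
    [MeasurableSpace α] {ν : Measure α} [IsFiniteMeasure ν] {s : Set α} {f g : α → ℝ}
    (hfg : MonovaryOn f g s) (hs : ∀ᵐ x ∂ν, x ∈ s) (hf : Integrable f ν) (hg : Integrable g ν)
    (hfg_int : Integrable (fun x => f x * g x) ν) :
    (∫ x, f x ∂ν) * (∫ x, g x ∂ν) ≤ ν.real univ * ∫ x, f x * g x ∂ν := by
  have hpair : ∀ᵐ p ∂ν.prod ν, 0 ≤ (f p.1 - f p.2) * (g p.1 - g p.2) := by
    filter_upwards [Measure.quasiMeasurePreserving_fst.ae hs,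
      Measure.quasiMeasurePreserving_snd.ae hs] with p hp₁ hp₂
    exact hfg.sub_mul_sub_nonneg hp₂ hp₁
  have hdiag₁ := hfg_int.comp_fst ν
  have hdiag₂ := hfg_int.comp_snd ν
  have hcross₁ : Integrable (fun p : α × α => f p.1 * g p.2) (ν.prod ν) := hf.mul_prod hg
  have hcross₂ : Integrable (fun p : α × α => g p.1 * f p.2) (ν.prod ν) := hg.mul_prod hf
  have hexpand : ∫ p, (f p.1 - f p.2) * (g p.1 - g p.2) ∂ν.prod ν
      = 2 * (ν.real univ * ∫ x, f x * g x ∂ν - (∫ x, f x ∂ν) * ∫ x, g x ∂ν) := by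
    calc ∫ p, (f p.1 - f p.2) * (g p.1 - g p.2) ∂ν.prod ν
        = ∫ p, (f p.1 * g p.1 + f p.2 * g p.2 - (f p.1 * g p.2 + g p.1 * f p.2)) ∂ν.prod ν := by
          congr 1 with p; ring
      _ = _ := by
        rw [integral_sub (by exact hdiag₁.add hdiag₂) (by exact hcross₁.add hcross₂),
          integral_add hdiag₁ hdiag₂, integral_add hcross₁ hcross₂,
          integral_fun_fst (fun x => f x * g x), integral_fun_snd (fun x => f x * g x),
          integral_prod_mul f g, integral_prod_mul g f]
        ring
  linarith [integral_nonneg_of_ae hpair]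

theorem eq_of_ae_eq_const_of_measure_inter_ne_zero {X β : Type*} [MeasurableSpace X]
    {μ : Measure X} {u : X → β} {s t : Set X} {c₁ c₂ : β}
    (h₁ : ∀ᵐ x ∂μ, x ∈ s → u x = c₁) (h₂ : ∀ᵐ x ∂μ, x ∈ t → u x = c₂) (hst : μ (s ∩ t) ≠ 0) :
    c₁ = c₂ := by
  by_contra hne
  refine hst (measure_mono_null ?_ (ae_iff.1 (h₁.and h₂)))
  rintro x ⟨hxs, hxt⟩ ⟨hx₁, hx₂⟩
  exact hne ((hx₁ hxs).symm.trans (hx₂ hxt))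

/-- The constants of overlapping neighbourhoods agree, so they form a locally constant function
on `T`, constant by preconnectedness; a countable subcover turns it into one a.e. statement. -/
theorem IsPreconnected.exists_ae_eq_const_of_locally {X : Type*} [TopologicalSpace X]
    [SecondCountableTopology X] [MeasurableSpace X] {μ : Measure X} {T : Set X} {u : X → ℝ}
    (hT : IsPreconnected T) (hpos : ∀ U, IsOpen U → (U ∩ T).Nonempty → μ U ≠ 0)
    (hloc : ∀ w ∈ T, ∃ U, IsOpen U ∧ w ∈ U ∧ ∃ c, ∀ᵐ x ∂μ, x ∈ U → u x = c) :
    ∃ c, ∀ᵐ x ∂μ, x ∈ T → u x = c := by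
  rcases T.eq_empty_or_nonempty with rfl | ⟨w₀, hw₀⟩
  · exact ⟨0, Eventually.of_forall fun _ hx => absurd hx (notMem_empty _)⟩
  choose U hU_open hw_mem c hc using fun w : T => hloc w w.2
  have := isPreconnected_iff_preconnectedSpace.1 hT
  have hc_loc : IsLocallyConstant c := by
    refine IsLocallyConstant.iff_exists_open _ |>.2 fun w => ⟨Subtype.val ⁻¹' U w,
      (hU_open w).preimage continuous_subtype_val, hw_mem w, fun y hy => ?_⟩
    exact eq_of_ae_eq_const_of_measure_inter_ne_zero (hc y) (hc w)
      (hpos _ ((hU_open y).inter (hU_open w)) ⟨y, ⟨hw_mem y, hy⟩, y.2⟩)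
  obtain ⟨S, hS_count, hS_cover⟩ := isOpen_iUnion_countable U hU_open
  have hS : ∀ᵐ x ∂μ, ∀ w ∈ S, x ∈ U w → u x = c ⟨w₀, hw₀⟩ := by
    refine (ae_ball_iff hS_count).2 fun w _ => ?_
    rw [← hc_loc.apply_eq_of_preconnectedSpace w]
    exact hc w
  refine ⟨c ⟨w₀, hw₀⟩, hS.mono fun x hx hxT => ?_⟩
  have hx_cover : x ∈ ⋃ w ∈ S, U w := hS_cover ▸ mem_iUnion.2 ⟨⟨x, hxT⟩, hw_mem _⟩
  obtain ⟨w, hwS, hxw⟩ := mem_iUnion₂.1 hx_cover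
  exact hx w hwS hxw

theorem IsOpen.setIntegral_nonpos_of_connectedComponentIn {X : Type*} [TopologicalSpace X]
    [LocallyConnectedSpace X] [SeparableSpace X] [MeasurableSpace X] [OpensMeasurableSpace X]
    {μ : Measure X} {U : Set X} {f : X → ℝ} (hU : IsOpen U) (hf : IntegrableOn f U μ)
    (h : ∀ x ∈ U, ∫ y in connectedComponentIn U x, f y ∂μ ≤ 0) :
    ∫ y in U, f y ∂μ ≤ 0 := by
  set 𝒞 := connectedComponentIn U '' U
  have h𝒞_open : ∀ C ∈ 𝒞, IsOpen C := by
    rintro _ ⟨x, -, rfl⟩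
    exact hU.connectedComponentIn
  have h𝒞_disj : 𝒞.PairwiseDisjoint id := by
    rintro _ ⟨x, -, rfl⟩ _ ⟨y, -, rfl⟩ hne
    refine disjoint_left.2 fun z hzx hzy => hne ?_
    exact (connectedComponentIn_eq hzx).trans (connectedComponentIn_eq hzy).symm
  have h𝒞_count : 𝒞.Countable := h𝒞_disj.countable_of_isOpen h𝒞_open <| by
    rintro _ ⟨x, hx, rfl⟩
    exact ⟨x, mem_connectedComponentIn hx⟩
  have hU_eq : U = ⋃ C : 𝒞, (C : Set X) := by
    rw [← sUnion_eq_iUnion]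
    refine subset_antisymm (fun x hx => ⟨_, ⟨x, hx, rfl⟩, mem_connectedComponentIn hx⟩) ?_
    rintro _ ⟨_, ⟨x, -, rfl⟩, hy⟩
    exact connectedComponentIn_subset U x hy
  have := h𝒞_count.to_subtype
  rw [hU_eq, integral_iUnion (fun C : 𝒞 => (h𝒞_open C C.2).measurableSet) (h𝒞_disj.subtype _ _)
    (hU_eq ▸ hf)]
  exact tsum_nonpos fun ⟨_, x, hx, rfl⟩ => h x hx

instance : IsFiniteMeasure μ01 := by
  unfold μ01
  infer_instance

theorem μ01_ne_zero_of_isOpen {U : Set ℝ} (hU : IsOpen U) (hne : (U ∩ Ioo 0 1).Nonempty) :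
    μ01 U ≠ 0 := by
  rw [μ01, Measure.restrict_apply hU.measurableSet]
  exact (hU.inter isOpen_Ioo).measure_ne_zero volume hne

theorem IsPreconnected.exists_μ01_ae_eq_const {u : ℝ → ℝ} {T : Set ℝ} (hT : IsPreconnected T)
    (hT_sub : T ⊆ Ioo 0 1)
    (hloc : ∀ w ∈ T, ∃ a b c, a < w ∧ w < b ∧ ∀ᵐ x ∂μ01, x ∈ Ioo a b → u x = c) :
    ∃ c, ∀ᵐ x ∂μ01, x ∈ T → u x = c := by
  refine hT.exists_ae_eq_const_of_locally (fun U hU ⟨w, hwU, hwT⟩ =>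
    μ01_ne_zero_of_isOpen hU ⟨w, hwU, hT_sub hwT⟩) fun w hw => ?_
  obtain ⟨a, b, c, haw, hwb, hc⟩ := hloc w hw
  exact ⟨Ioo a b, isOpen_Ioo, ⟨haw, hwb⟩, c, hc⟩

theorem isOpen_locConstSet (g : ℝ → ℝ) : IsOpen (locConstSet g) := by
  rw [isOpen_iff_mem_nhds]
  rintro w ⟨hw, a, b, c, haw, hwb, hc⟩
  filter_upwards [Ioo_mem_nhds hw.1 hw.2, Ioo_mem_nhds haw hwb] with x hx hx'
  exact ⟨hx, a, b, c, hx'.1, hx'.2, hc⟩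

theorem mem_Hspace_self {g : ℝ → ℝ} (hg : MemLp g 2 μ01) : g ∈ Hspace g :=
  ⟨hg, fun _ _ hab => isPreconnected_Ioo.exists_μ01_ae_eq_const (fun _ hw => (hab hw).1)
    fun _ hw => (hab hw).2⟩

theorem indicator_compl_locConstSet_mem_Hspace {g u : ℝ → ℝ} (hu : MemLp u 2 μ01) :
    (locConstSet g)ᶜ.indicator u ∈ Hspace g :=
  ⟨hu.indicator (isOpen_locConstSet g).measurableSet.compl, fun _ _ hab =>
    ⟨0, Eventually.of_forall fun _ hx => indicator_of_notMem (notMem_compl_iff.2 (hab hx)) _⟩⟩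

theorem indicator_connectedComponentIn_mem_Hspace (g : ℝ → ℝ) (x : ℝ) :
    (connectedComponentIn (locConstSet g) x).indicator 1 ∈ Hspace g := by
  refine ⟨(memLp_const 1).indicator (isOpen_locConstSet g).connectedComponentIn.measurableSet,
    fun a b hab => ?_⟩
  rcases (Ioo a b ∩ connectedComponentIn (locConstSet g) x).eq_empty_or_nonempty with
    hdisj | ⟨y, hy, hyx⟩
  · exact ⟨0, Eventually.of_forall fun z hz =>
      indicator_of_notMem (fun hzx => hdisj.subset ⟨hz, hzx⟩) _⟩
  · have hsub : Ioo a b ⊆ connectedComponentIn (locConstSet g) x :=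
      connectedComponentIn_eq hyx ▸ isPreconnected_Ioo.subset_connectedComponentIn hy hab
    exact ⟨1, Eventually.of_forall fun z hz => indicator_of_mem (hsub hz) _⟩

namespace IsProjH

variable {g h P : ℝ → ℝ}

theorem setIntegral_sub_mul_eq_zero (hP : IsProjH g h P) {S : Set ℝ} (hS : MeasurableSet S)
    {u : ℝ → ℝ} (hu : S.indicator u ∈ Hspace g) :
    ∫ x in S, (h x - P x) * u x ∂μ01 = 0 := by
  rw [← integral_indicator hS]
  simp_rw [indicator_mul_right]
  exact hP.2 _ hu

theorem ae_eq_on_compl_locConstSet (hP : IsProjH g h P) (hh : MemLp h 2 μ01) :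
    ∀ᵐ x ∂μ01.restrict (locConstSet g)ᶜ, P x = h x := by
  have hhP : MemLp (fun x => h x - P x) 2 μ01 := hh.sub hP.1.1
  have hzero := hP.setIntegral_sub_mul_eq_zero (isOpen_locConstSet g).measurableSet.compl
    (indicator_compl_locConstSet_mem_Hspace hhP)
  rw [integral_eq_zero_iff_of_nonneg (fun x => mul_self_nonneg _)
    (hhP.integrable_mul hhP).integrableOn] at hzero
  filter_upwards [hzero] with x hx
  exact (sub_eq_zero.1 (mul_self_eq_zero.1 hx)).symm

theorem setIntegral_connectedComponentIn_nonpos (hP : IsProjH g h P) (hh : h ∈ coneK)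
    {z : ℝ → ℝ} (hz : z ∈ coneK) {x : ℝ} (hx : x ∈ locConstSet g) :
    ∫ y in connectedComponentIn (locConstSet g) x, (P y - h y) * z y ∂μ01 ≤ 0 := by
  set C := connectedComponentIn (locConstSet g) x
  have hC_open : IsOpen C := (isOpen_locConstSet g).connectedComponentIn
  have hC_sub : C ⊆ Ioo 0 1 := fun y hy => (connectedComponentIn_subset _ _ hy).1
  obtain ⟨c, hc⟩ : ∃ c, ∀ᵐ y ∂μ01, y ∈ C → P y = c := by
    refine isPreconnected_connectedComponentIn.exists_μ01_ae_eq_const hC_sub fun w hw => ?_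
    obtain ⟨a, b, ⟨haw, hwb⟩, hab⟩ := mem_nhds_iff_exists_Ioo_subset.1 (hC_open.mem_nhds hw)
    obtain ⟨c, hc⟩ := hP.1.2 a b (hab.trans (connectedComponentIn_subset _ _))
    exact ⟨a, b, c, haw, hwb, hc⟩
  have hPc : ∀ᵐ y ∂μ01.restrict C, P y = c := (ae_restrict_iff' hC_open.measurableSet).2 hc
  have hh_int : Integrable h (μ01.restrict C) := (hh.2.restrict C).integrable one_le_two
  have hz_int : Integrable z (μ01.restrict C) := (hz.2.restrict C).integrable one_le_two
  have hhz_int : Integrable (fun y => h y * z y) (μ01.restrict C) :=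
    (hh.2.restrict C).integrable_mul (hz.2.restrict C)
  have hmean : ∫ y in C, h y ∂μ01 = μ01.real C * c := by
    have horth := hP.setIntegral_sub_mul_eq_zero hC_open.measurableSet
      (indicator_connectedComponentIn_mem_Hspace g x)
    rw [← smul_eq_mul, ← setIntegral_const, ← sub_eq_zero,
      ← integral_sub hh_int (integrable_const c), ← horth]
    exact integral_congr_ae (hPc.mono fun y hy => by simp [hy])
  have hcheb := ((hh.1.mono hC_sub).monovaryOn (hz.1.mono hC_sub))
    |>.integral_mul_integral_le_measureReal_mul_integral
      (ae_restrict_mem hC_open.measurableSet) hh_int hz_int hhz_int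
  rw [hmean, measureReal_restrict_apply_univ, mul_assoc] at hcheb
  have hxC : x ∈ C := mem_connectedComponentIn hx
  have hm_pos : 0 < μ01.real C := ENNReal.toReal_pos
    (μ01_ne_zero_of_isOpen hC_open ⟨x, hxC, hC_sub hxC⟩) (measure_ne_top _ _)
  calc ∫ y in C, (P y - h y) * z y ∂μ01
      = ∫ y in C, (c * z y - h y * z y) ∂μ01 :=
        integral_congr_ae (hPc.mono fun y hy => by simp only [hy]; ring)
    _ = c * ∫ y in C, z y ∂μ01 - ∫ y in C, h y * z y ∂μ01 := by
        rw [integral_sub (hz_int.const_mul c) hhz_int, integral_const_mul]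
    _ ≤ 0 := sub_nonpos.2 (le_of_mul_le_mul_left hcheb hm_pos)

theorem integral_sub_mul_nonpos (hP : IsProjH g h P) (hh : h ∈ coneK) {z : ℝ → ℝ}
    (hz : z ∈ coneK) : ∫ x, (P x - h x) * z x ∂μ01 ≤ 0 := by
  have hΩ := isOpen_locConstSet g
  have hint : Integrable (fun x => (P x - h x) * z x) μ01 := (hP.1.1.sub hh.2).integrable_mul hz.2
  have hcompl : ∫ x in (locConstSet g)ᶜ, (P x - h x) * z x ∂μ01 = 0 :=
    integral_eq_zero_of_ae <| (hP.ae_eq_on_compl_locConstSet hh.2).mono fun x hx => by simp [hx]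
  rw [← integral_add_compl hΩ.measurableSet hint, hcompl, add_zero]
  exact hΩ.setIntegral_nonpos_of_connectedComponentIn hint.integrableOn
    fun x hx => hP.setIntegral_connectedComponentIn_nonpos hh hz hx

end IsProjH

theorem stmt11 (g h P : ℝ → ℝ) (hg : g ∈ coneK) (hh : h ∈ coneK)
    (hP : IsProjH g h P) : subdiffIK g (fun w => P w - h w) := by
  refine ⟨hg, fun z hz => ?_⟩
  have hg_orth : ∫ x, (h x - P x) * g x ∂μ01 = 0 := hP.2 g (mem_Hspace_self hg.2)
  show ∫ x, (P x - h x) * (z x - g x) ∂μ01 ≤ 0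
  calc ∫ x, (P x - h x) * (z x - g x) ∂μ01
      = ∫ x, (P x - h x) * z x ∂μ01 + ∫ x, (h x - P x) * g x ∂μ01 := by
        rw [← integral_add (f := fun x => (P x - h x) * z x) (g := fun x => (h x - P x) * g x)
          ((hP.1.1.sub hh.2).integrable_mul hz.2) ((hh.2.sub hP.1.1).integrable_mul hg.2)]
        congr 1 with x
        ring
    _ ≤ 0 := by
        rw [hg_orth, add_zero]
        exact hP.integral_sub_mul_nonpos hh hz
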